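/- arXiv:0901.4687 — 2 statements merged into one kernel-verified Lean document; each statement's English description precedes it below -/
import Mathlib

section
/- Let A be a commutative superalgebra and B ⊆ A a graded subring (i.e. B = (B ∩ 𝒜 0) ⊕ (B ∩ 𝒜 1)). If A is finitely generated as a B-module, then every even element of A (every element of 𝒜 0) is integral over the commutative ring B₀ = B ∩ 𝒜 0. -/
/-! Pick generators `S ∋ 1` of `A` over `B` and write `a * x = ∑ (e_{xy} + o_{xy}) * y` with
`e_{xy} ∈ B₀` and `o_{xy} ∈ B` odd. Odd elements anticommute and square to zero, so a product of
them with a repeated factor vanishes and the `B₀`-algebra `Λ` generated by the finitely many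
`o_{xy}` is a finite `B₀`-module. The even element `a` is central, hence preserves the finite
`B₀`-module `Λ · span_{B₀} S`, which contains `1`; Cayley–Hamilton makes `a` integral over `B₀`. -/

open Polynomial

section Anticommuting

variable {A : Type*} [Ring A] {O : Set A}

theorem mul_list_prod_eq_zero_of_mem (hanti : ∀ u ∈ O, ∀ v ∈ O, u * v = -(v * u))
    (hsq : ∀ u ∈ O, u * u = 0) {l : List A} (hl : ∀ u ∈ l, u ∈ O) {v : A} (hv : v ∈ l) :
    v * l.prod = 0 := by
  induction l with
  | nil => simp at hv
  | cons w t ih =>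
    have hvO := hl v hv
    rw [List.prod_cons, ← mul_assoc]
    rcases List.mem_cons.mp hv with rfl | hvt
    · rw [hsq v hvO, zero_mul]
    · rw [hanti v hvO w (hl w List.mem_cons_self), neg_mul, mul_assoc,
        ih (fun u hu => hl u (List.mem_cons_of_mem _ hu)) hvt, mul_zero, neg_zero]

theorem list_prod_eq_zero_of_not_nodup (hanti : ∀ u ∈ O, ∀ v ∈ O, u * v = -(v * u))
    (hsq : ∀ u ∈ O, u * u = 0) {l : List A} (hl : ∀ u ∈ l, u ∈ O) (hnd : ¬ l.Nodup) :
    l.prod = 0 := by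
  induction l with
  | nil => exact absurd List.nodup_nil hnd
  | cons u t ih =>
    have ht : ∀ w ∈ t, w ∈ O := fun w hw => hl w (List.mem_cons_of_mem _ hw)
    rw [List.prod_cons]
    by_cases hut : u ∈ t
    · exact mul_list_prod_eq_zero_of_mem hanti hsq ht hut
    · rw [ih ht fun hnt => hnd (List.nodup_cons.mpr ⟨hut, hnt⟩), mul_zero]

theorem finite_closure_of_anticomm (hO : O.Finite) (hanti : ∀ u ∈ O, ∀ v ∈ O, u * v = -(v * u))
    (hsq : ∀ u ∈ O, u * u = 0) : (Submonoid.closure O : Set A).Finite := by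
  have : Finite O := hO
  have hlists : {l : List O | l.length ≤ hO.toFinset.card}.Finite := List.finite_length_le _ _
  refine ((hlists.image fun l => (l.map Subtype.val).prod).insert 0).subset ?_
  intro x hx
  obtain ⟨l, hl, rfl⟩ := Submonoid.exists_list_of_mem_closure hx
  classical
  by_cases hnd : l.Nodup
  · refine Or.inr ⟨l.pmap Subtype.mk hl, ?_, by simp [List.map_pmap]⟩
    rw [Set.mem_ofPred_eq, List.length_pmap, ← List.toFinset_card_of_nodup hnd]
    exact Finset.card_le_card fun u hu => hO.mem_toFinset.mpr (hl u (List.mem_toFinset.mp hu))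
  · exact Or.inl (list_prod_eq_zero_of_not_nodup hanti hsq hl hnd)

theorem fg_adjoin_of_anticomm {R : Type*} [CommSemiring R] [Algebra R A] (hO : O.Finite)
    (hanti : ∀ u ∈ O, ∀ v ∈ O, u * v = -(v * u)) (hsq : ∀ u ∈ O, u * u = 0) :
    (Subalgebra.toSubmodule (Algebra.adjoin R O)).FG := by
  rw [Algebra.adjoin_eq_span]
  exact Submodule.fg_span (finite_closure_of_anticomm hO hanti hsq)

end Anticommuting

theorem isIntegral_of_mul_mem_of_one_mem {R A : Type*} [CommRing R] [Ring A] [Algebra R A]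
    {N : Submodule R A} (hN : N.FG) (h1 : (1 : A) ∈ N) {a : A} (ha : ∀ x ∈ N, a * x ∈ N) :
    IsIntegral R a := by
  have : Module.Finite R N := Module.Finite.iff_fg.mpr hN
  -- Cayley–Hamilton for left multiplication by `a` on `N`, evaluated at `1 ∈ N`.
  let f : Module.End R N := (LinearMap.mulLeft R a).restrict ha
  obtain ⟨q, hq, hqf⟩ := (Algebra.IsIntegral.isIntegral f : IsIntegral R f)
  have hcomp : ∀ (p : R[X]) (x : N), ((aeval f p x : N) : A) = aeval a p * x := by
    intro p x
    induction p using Polynomial.induction_on' with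
    | add p q hp hq => simp [hp, hq, add_mul]
    | monomial n r =>
      simp [f, Module.End.pow_restrict (f' := LinearMap.mulLeft R a) n ha, LinearMap.pow_mulLeft,
        Algebra.smul_def, mul_assoc]
  refine ⟨q, hq, ?_⟩
  have := hcomp q ⟨1, h1⟩
  rw [← aeval_def] at hqf ⊢
  simpa [hqf] using this.symm

theorem isIntegral_of_mul_mem_mul_span {R A : Type*} [CommRing R] [Ring A] [Algebra R A]
    {a : A} (ha : a ∈ Set.center A) {Λ : Subalgebra R A} (hΛ : (Subalgebra.toSubmodule Λ).FG)
    {S : Finset A} (h1 : 1 ∈ S)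
    (hS : ∀ x ∈ S, a * x ∈ Subalgebra.toSubmodule Λ * Submodule.span R (S : Set A)) :
    IsIntegral R a := by
  set N := Subalgebra.toSubmodule Λ * Submodule.span R (S : Set A)
  have hΛN : Subalgebra.toSubmodule Λ * N ≤ N := by
    rw [← mul_assoc]
    exact mul_le_mul_left (by simpa using Subalgebra.mul_toSubmodule_le Λ Λ) _
  have hspan : Submodule.span R (S : Set A) ≤ N.comap (LinearMap.mulLeft R a) :=
    Submodule.span_le.mpr hS
  refine isIntegral_of_mul_mem_of_one_mem (hΛ.mul ⟨S, rfl⟩)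
    (one_mul (1 : A) ▸ Submodule.mul_mem_mul Λ.one_mem (Submodule.subset_span h1)) fun z hz => ?_
  refine Submodule.mul_induction_on hz (fun l hl s hs => ?_) fun x y hx hy => ?_
  · rw [← mul_assoc, (Set.mem_center_iff.mp ha).comm l, mul_assoc]
    exact hΛN (Submodule.mul_mem_mul hl (hspan hs))
  · rw [mul_add]
    exact N.add_mem hx hy

section Superalgebra

variable {A : Type*} [Ring A] (𝒜 : ZMod 2 → AddSubgroup A)

theorem anticomm_of_mem_one
    (hsuper : ∀ (i j : ZMod 2), ∀ a ∈ 𝒜 i, ∀ b ∈ 𝒜 j,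
      a * b = ((-1 : ℤ) ^ ((i * j).val)) • (b * a))
    {u v : A} (hu : u ∈ 𝒜 1) (hv : v ∈ 𝒜 1) : u * v = -(v * u) := by
  have h := hsuper 1 1 u hu v hv
  rwa [show ((1 : ZMod 2) * 1).val = 1 from rfl, pow_one, neg_one_smul] at h

variable [GradedRing 𝒜]

theorem mem_center_of_mem_zero
    (hsuper : ∀ (i j : ZMod 2), ∀ a ∈ 𝒜 i, ∀ b ∈ 𝒜 j,
      a * b = ((-1 : ℤ) ^ ((i * j).val)) • (b * a))
    {x : A} (hx : x ∈ 𝒜 0) : x ∈ Set.center A := by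
  refine Semigroup.mem_center_iff.mpr fun y => ?_
  induction y using DirectSum.Decomposition.inductionOn 𝒜 with
  | zero => simp
  | homogeneous y => simpa using (hsuper 0 _ x hx y y.2).symm
  | add y₁ y₂ h₁ h₂ => rw [mul_add, add_mul, h₁, h₂]

/-- `B₀ = B ∩ 𝒜 0`, taken inside the centre of `A` so that `A` is a `B₀`-algebra; under
supercommutativity every even element is central, so nothing is lost. -/
def evenPart (B : Subring A) : Subring (Subring.center A) :=
  (B ⊓ SetLike.GradeZero.subring 𝒜).comap (Subring.center A).subtype

theorem mem_adjoin_mul_span_of_mem_span (hcentral : ∀ x ∈ 𝒜 0, x ∈ Set.center A)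
    {B : Subring A}
    (hgraded : ∀ b ∈ B, ∃ b₀ b₁ : A, b₀ ∈ B ∧ b₀ ∈ 𝒜 0 ∧ b₁ ∈ B ∧ b₁ ∈ 𝒜 1 ∧ b = b₀ + b₁)
    {S : Finset A} {z : A} (hz : z ∈ Submodule.span B (S : Set A)) :
    ∃ O : Finset A, (∀ u ∈ O, u ∈ 𝒜 1) ∧
      z ∈ Subalgebra.toSubmodule (Algebra.adjoin (evenPart 𝒜 B) (O : Set A)) *
        Submodule.span (evenPart 𝒜 B) (S : Set A) := by
  classical
  obtain ⟨c, -, rfl⟩ := Submodule.mem_span_finset.mp hz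
  choose e o heB he0 _ ho1 hc using fun y => hgraded (c y) (c y).2
  let e' : A → evenPart 𝒜 B := fun y => ⟨⟨e y, hcentral _ (he0 y)⟩, heB y, he0 y⟩
  refine ⟨S.image o, by simpa using fun y _ => ho1 y, Submodule.sum_mem _ fun y hy => ?_⟩
  have hsplit : c y • y = (algebraMap _ A (e' y) + o y) * y :=
    congrArg (· * y) (hc y)
  rw [hsplit]
  exact Submodule.mul_mem_mul
    (add_mem (Subalgebra.algebraMap_mem _ _)
      (Algebra.subset_adjoin (Finset.mem_coe.mpr (Finset.mem_image_of_mem o hy))))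
    (Submodule.subset_span hy)

theorem isIntegral_evenPart_of_mem_zero
    (hsuper : ∀ (i j : ZMod 2), ∀ a ∈ 𝒜 i, ∀ b ∈ 𝒜 j,
      a * b = ((-1 : ℤ) ^ ((i * j).val)) • (b * a))
    (hodd : ∀ a ∈ 𝒜 1, a * a = 0) {B : Subring A}
    (hgraded : ∀ b ∈ B, ∃ b₀ b₁ : A, b₀ ∈ B ∧ b₀ ∈ 𝒜 0 ∧ b₁ ∈ B ∧ b₁ ∈ 𝒜 1 ∧ b = b₀ + b₁)
    [Module.Finite B A] {a : A} (ha : a ∈ 𝒜 0) : IsIntegral (evenPart 𝒜 B) a := by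
  classical
  have hcentral : ∀ x ∈ 𝒜 0, x ∈ Set.center A := fun x => mem_center_of_mem_zero 𝒜 hsuper
  obtain ⟨S₀, hS₀⟩ := Module.Finite.fg_top (R := B) (M := A)
  have hspan : ∀ x : A, x ∈ Submodule.span B (↑(insert 1 S₀) : Set A) := fun x =>
    Submodule.span_mono (by simp [Set.subset_insert]) (hS₀ ▸ Submodule.mem_top)
  choose O hOodd hO using fun x =>
    mem_adjoin_mul_span_of_mem_span 𝒜 hcentral hgraded (hspan (a * x))
  have hOodd' : ∀ u ∈ ((insert 1 S₀).biUnion O : Set A), u ∈ 𝒜 1 := by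
    intro u hu
    obtain ⟨x, -, hux⟩ := Finset.mem_biUnion.mp hu
    exact hOodd x u hux
  exact isIntegral_of_mul_mem_mul_span (hcentral a ha)
    (fg_adjoin_of_anticomm (Finset.finite_toSet _)
      (fun u hu v hv => anticomm_of_mem_one 𝒜 hsuper (hOodd' u hu) (hOodd' v hv))
      fun u hu => hodd u (hOodd' u hu))
    (Finset.mem_insert_self 1 S₀) fun x hx =>
      mul_le_mul_left (Subalgebra.toSubmodule.monotone (Algebra.adjoin_mono
        (Finset.coe_subset.mpr (Finset.subset_biUnion_of_mem O hx)))) _ (hO x)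

end Superalgebra

/-- Let `A` be a commutative superalgebra and `B ⊆ A` a graded subring
(every element of `B` is the sum of an even and an odd element of `B`).  If `A` is
finitely generated as a `B`-module, then every even element of `A` is integral over the
ring `B₀ = B ∩ 𝒜 0`: it satisfies a monic polynomial all of whose coefficients lie in
`B ∩ 𝒜 0`. -/
theorem even_integral_of_module_finite
    {A : Type*} [Ring A] (𝒜 : ZMod 2 → AddSubgroup A) [GradedRing 𝒜]
    (hsuper : ∀ (i j : ZMod 2), ∀ a ∈ 𝒜 i, ∀ b ∈ 𝒜 j,
      a * b = ((-1 : ℤ) ^ ((i * j).val)) • (b * a))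
    (hodd : ∀ a ∈ 𝒜 1, a * a = 0)
    (B : Subring A)
    (hgraded : ∀ b ∈ B, ∃ b₀ b₁ : A, b₀ ∈ B ∧ b₀ ∈ 𝒜 0 ∧ b₁ ∈ B ∧ b₁ ∈ 𝒜 1 ∧
      b = b₀ + b₁)
    [Module.Finite B A] :
    ∀ a ∈ 𝒜 0, ∃ p : Polynomial A, p.Monic ∧
      (∀ k : ℕ, p.coeff k ∈ B ∧ p.coeff k ∈ 𝒜 0) ∧ p.eval a = 0 := by
  intro a ha
  obtain ⟨q, hq, hqa⟩ := isIntegral_evenPart_of_mem_zero 𝒜 hsuper hodd hgraded ha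
  refine ⟨q.map (algebraMap _ A), hq.map _, fun k => ?_, by rwa [eval_map, ← aeval_def]⟩
  rw [coeff_map]
  exact (q.coeff k).2
end

section
/- Let A be a commutative superalgebra and φ : A → A an odd right superderivation. If there exist even elements f₁, …, f_n ∈ 𝒜 0 and odd elements h₁, …, h_n ∈ 𝒜 1 such that Σᵢ fᵢ·φ(hᵢ) = 1, then the odd element h = Σᵢ fᵢ·hᵢ satisfies that φ(h) is a unit of A. -/
/-!
Write `gᵢ = φ(fᵢ) hᵢ`. Since `hᵢ` is odd, the superderivation rule gives
`φ(fᵢ hᵢ) = fᵢ φ(hᵢ) - gᵢ`, so `φ(h) = 1 - Σ gᵢ`. Each `gᵢ` is a product of two odd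
elements, hence even (so the `gᵢ` commute) and of square zero (odd elements anticommute
and square to zero). Thus `Σ gᵢ` is nilpotent and `1 - Σ gᵢ` is a unit.
-/

theorem mul_mul_self_eq_zero_of_anticommute {R : Type*} [Ring R] {a b : R}
    (hab : b * a = -(a * b)) (hb : b * b = 0) : a * b * (a * b) = 0 := by
  calc a * b * (a * b) = a * (b * a) * b := by noncomm_ring
    _ = -(a * a * (b * b)) := by rw [hab]; noncomm_ring
    _ = 0 := by rw [hb, mul_zero, neg_zero]

section Supercommutative

variable {A : Type*} [Ring A] {𝒜 : ZMod 2 → AddSubgroup A}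

theorem commute_of_mem_zero
    (hsuper : ∀ (i j : ZMod 2), ∀ a ∈ 𝒜 i, ∀ b ∈ 𝒜 j,
      a * b = ((-1 : ℤ) ^ ((i * j).val)) • (b * a))
    {a b : A} {j : ZMod 2} (ha : a ∈ 𝒜 0) (hb : b ∈ 𝒜 j) : Commute a b := by
  show a * b = b * a
  simpa using hsuper 0 j a ha b hb

theorem mul_eq_neg_mul_of_mem_one
    (hsuper : ∀ (i j : ZMod 2), ∀ a ∈ 𝒜 i, ∀ b ∈ 𝒜 j,
      a * b = ((-1 : ℤ) ^ ((i * j).val)) • (b * a))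
    {a b : A} (ha : a ∈ 𝒜 1) (hb : b ∈ 𝒜 1) : a * b = -(b * a) := by
  simpa [ZMod.val_one] using hsuper 1 1 a ha b hb

theorem isNilpotent_mul_of_mem_one
    (hsuper : ∀ (i j : ZMod 2), ∀ a ∈ 𝒜 i, ∀ b ∈ 𝒜 j,
      a * b = ((-1 : ℤ) ^ ((i * j).val)) • (b * a))
    (hodd : ∀ a ∈ 𝒜 1, a * a = 0) {a b : A} (ha : a ∈ 𝒜 1) (hb : b ∈ 𝒜 1) :
    IsNilpotent (a * b) :=
  ⟨2, by rw [pow_two, mul_mul_self_eq_zero_of_anticommute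
    (mul_eq_neg_mul_of_mem_one hsuper hb ha) (hodd b hb)]⟩

theorem map_mul_of_mem_one {φ : A →+ A}
    (hφmul : ∀ (f₁ : A) (j : ZMod 2), ∀ f₂ ∈ 𝒜 j,
      φ (f₁ * f₂) = f₁ * φ f₂ + ((-1 : ℤ) ^ j.val) • (φ f₁ * f₂))
    (f₁ : A) {f₂ : A} (hf₂ : f₂ ∈ 𝒜 1) : φ (f₁ * f₂) = f₁ * φ f₂ - φ f₁ * f₂ := by
  simp [hφmul f₁ 1 f₂ hf₂, ZMod.val_one, sub_eq_add_neg]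

end Supercommutative

/-- Let `A` be a commutative superalgebra and `φ : A → A` an odd right
superderivation.  If there exist even elements `f₁, …, f_n` and odd elements
`h₁, …, h_n` with `Σᵢ fᵢ * φ(hᵢ) = 1`, then `φ(Σᵢ fᵢ * hᵢ)` is a unit of `A`. -/
theorem isUnit_superderivation_of_sum_eq_one
    {A : Type*} [Ring A] (𝒜 : ZMod 2 → AddSubgroup A) [GradedRing 𝒜]
    (hsuper : ∀ (i j : ZMod 2), ∀ a ∈ 𝒜 i, ∀ b ∈ 𝒜 j,
      a * b = ((-1 : ℤ) ^ ((i * j).val)) • (b * a))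
    (hodd : ∀ a ∈ 𝒜 1, a * a = 0)
    (φ : A →+ A)
    (hφdeg : ∀ i : ZMod 2, ∀ a ∈ 𝒜 i, φ a ∈ 𝒜 (i + 1))
    (hφmul : ∀ (f₁ : A) (j : ZMod 2), ∀ f₂ ∈ 𝒜 j,
      φ (f₁ * f₂) = f₁ * φ f₂ + ((-1 : ℤ) ^ j.val) • (φ f₁ * f₂))
    {n : ℕ} (f h : Fin n → A)
    (hf : ∀ i, f i ∈ 𝒜 0) (hh : ∀ i, h i ∈ 𝒜 1)
    (hone : ∑ i, f i * φ (h i) = 1) :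
    IsUnit (φ (∑ i, f i * h i)) := by
  have hφf : ∀ i, φ (f i) ∈ 𝒜 1 := fun i => by simpa using hφdeg 0 (f i) (hf i)
  have hφsum : φ (∑ i, f i * h i) = 1 - ∑ i, φ (f i) * h i := by
    simp only [map_sum, map_mul_of_mem_one hφmul _ (hh _), Finset.sum_sub_distrib, hone]
  rw [hφsum]
  refine IsNilpotent.isUnit_one_sub (Commute.isNilpotent_sum (fun i _ => ?_) fun i j _ _ => ?_)
  · exact isNilpotent_mul_of_mem_one hsuper hodd (hφf i) (hh i)
  · exact commute_of_mem_zero (j := 0) hsuper (SetLike.mul_mem_graded (hφf i) (hh i))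
      (SetLike.mul_mem_graded (hφf j) (hh j))
end
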